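/- arXiv:2206.13984 — 4 statements merged into one kernel-verified Lean document; each statement's English description precedes it below -/
import Mathlib

section
/- Let K ≥ 1 be an integer, let σ_X² > 0, let σ_{N_1}², …, σ_{N_K}² > 0, let r_1, …, r_K ≥ 0, and let D > 0 satisfy ∑_{k=1}^K (1 − exp(−2r_k))/σ_{N_k}² = 1/D. Let α_1 ≥ α_2 ≥ … ≥ α_K ≥ 0. Set z_k = (1 − exp(−2r_k))/σ_{N_k}², S_k = ∑_{i=k}^K z_i (with S_{K+1} = 0), and define R*_k = r_k + (1/2)·log(1/σ_X² + S_k) − (1/2)·log(1/σ_X² + S_{k+1}) for k = 1, …, K. Let 𝓡 be the set of all (R_1, …, R_K) ∈ ℝ^K such that for every subset A ⊆ {1, …, K}: ∑_{k∈A} R_k ≥ ∑_{k∈A} r_k + (1/2)·log(1/σ_X² + 1/D) − (1/2)·log(1/σ_X² + ∑_{k∈A^c} z_k), where A^c = {1,…,K} \ A. Then (R*_1, …, R*_K) ∈ 𝓡, and for every (R'_1, …, R'_K) ∈ 𝓡 one has ∑_{k=1}^K α_k·R*_k ≤ ∑_{k=1}^K α_k·R'_k. -/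
/-!
Because `t ↦ log (c + t)` is concave, its increments shrink as the base point grows. Adding the
indices of `A` one at a time in increasing order therefore shows that every rate constraint
of the region holds at `R*`, and the constraints of the initial segments `{1, …, j}` hold with
equality (the increments telescope). Summation by parts writes `∑ α_k (R'_k - R*_k)` as a
combination of these tight constraints with the nonnegative weights `α_j - α_{j+1}` and `α_K`.
-/

open Finset

theorem Real.log_add_sub_log_le_of_le {x y w : ℝ} (hx : 0 < x) (hxy : x ≤ y) (hw : 0 ≤ w) :
    Real.log (w + y) - Real.log y ≤ Real.log (w + x) - Real.log x := by
  have hy : 0 < y := hx.trans_le hxy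
  rw [← Real.log_div (by positivity) hy.ne', ← Real.log_div (by positivity) hx.ne']
  refine Real.log_le_log (by positivity) ?_
  rw [add_div, add_div, div_self hy.ne', div_self hx.ne']
  gcongr

section TailSums

variable {ι : Type*} [Fintype ι] [LinearOrder ι]

theorem sum_filter_le_eq_add_sum_filter_lt {M : Type*} [AddCommMonoid M] (z : ι → M) (k : ι) :
    ∑ i ∈ univ.filter (fun i => k ≤ i), z i
      = z k + ∑ i ∈ univ.filter (fun i => k < i), z i := by
  rw [← sum_insert (f := z) (by simp)]
  congr 1
  ext i
  simp [le_iff_eq_or_lt, eq_comm]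

theorem sum_compl_eq_add_sum_compl_insert {M : Type*} [AddCommMonoid M] (z : ι → M) {a : ι}
    {s : Finset ι} (ha : a ∉ s) :
    ∑ i ∈ sᶜ, z i = z a + ∑ i ∈ (insert a s)ᶜ, z i := by
  rw [compl_insert, add_sum_erase _ _ (mem_compl.2 ha)]

/-- `log (c + S_k) - log (c + S_{k+1})` for the tail sums `S_k = ∑_{i ≥ k} z i`; the excess
`R*_k - r_k` of the optimal rates is half of it, with `c = 1 / σ_X²`. -/
noncomputable def tailLogIncrement (c : ℝ) (z : ι → ℝ) (k : ι) : ℝ :=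
  Real.log (c + ∑ i ∈ univ.filter (fun i => k ≤ i), z i)
    - Real.log (c + ∑ i ∈ univ.filter (fun i => k < i), z i)

theorem log_sub_log_compl_le_sum_tailLogIncrement {c : ℝ} (hc : 0 < c) {z : ι → ℝ}
    (hz : ∀ i, 0 ≤ z i) (A : Finset ι) :
    Real.log (c + ∑ i, z i) - Real.log (c + ∑ i ∈ Aᶜ, z i)
      ≤ ∑ k ∈ A, tailLogIncrement c z k := by
  induction A using Finset.induction_on_max with
  | empty => simp
  | insert a s hlt ih =>
    have ha : a ∉ s := fun h => (hlt a h).false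
    have htail :
        ∑ i ∈ univ.filter (fun i => a < i), z i ≤ ∑ i ∈ (insert a s)ᶜ, z i := by
      refine sum_le_sum_of_subset_of_nonneg (fun i hi => ?_) fun i _ _ => hz i
      simp only [mem_filter, mem_univ, true_and] at hi
      simp only [mem_compl, mem_insert, not_or]
      exact ⟨hi.ne', fun his => (hlt i his).not_gt hi⟩
    have hconcave := Real.log_add_sub_log_le_of_le
      (add_pos_of_pos_of_nonneg hc (sum_nonneg fun i _ => hz i)) (add_le_add_right htail c) (hz a)
    rw [sum_compl_eq_add_sum_compl_insert z ha] at ih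
    rw [sum_insert ha, tailLogIncrement, sum_filter_le_eq_add_sum_filter_lt,
      add_left_comm c (z a)]
    rw [add_left_comm c (z a)] at ih
    linarith

theorem sum_tailLogIncrement_of_isLowerSet (c : ℝ) (z : ι → ℝ) {A : Finset ι}
    (hA : IsLowerSet (A : Set ι)) :
    ∑ k ∈ A, tailLogIncrement c z k
      = Real.log (c + ∑ i, z i) - Real.log (c + ∑ i ∈ Aᶜ, z i) := by
  induction A using Finset.induction_on_max with
  | empty => simp
  | insert a s hlt ih =>
    have ha : a ∉ s := fun h => (hlt a h).false
    have hs : IsLowerSet (s : Set ι) := fun i j hji hi =>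
      (mem_insert.1 (hA hji (mem_insert_of_mem hi))).resolve_left
        fun h => ((hlt i hi).trans_le (h ▸ hji)).false
    have hcompl : (insert a s)ᶜ = univ.filter (fun i => a < i) := by
      ext i
      simp only [mem_compl, mem_filter, mem_univ, true_and]
      refine ⟨fun hi => lt_of_not_ge fun hia => hi (hA hia (mem_insert_self a s)),
        fun hai hi => ?_⟩
      rcases mem_insert.1 hi with rfl | his
      exacts [hai.false, (hlt i his).not_gt hai]
    rw [sum_insert ha, ih hs, sum_compl_eq_add_sum_compl_insert z ha, tailLogIncrement,
      sum_filter_le_eq_add_sum_filter_lt, hcompl]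
    ring_nf

end TailSums

theorem Finset.sum_mul_nonneg_of_antitoneOn {ι R : Type*} [LinearOrder ι] [CommRing R]
    [LinearOrder R] [IsStrictOrderedRing R] {s : Finset ι} {a d : ι → R}
    (ha : AntitoneOn a s) (ha₀ : ∀ i ∈ s, 0 ≤ a i)
    (hd : ∀ j ∈ s, 0 ≤ ∑ i ∈ s with i ≤ j, d i) :
    0 ≤ ∑ i ∈ s, a i * d i := by
  induction s using Finset.induction_on_max generalizing a with
  | empty => simp
  | insert m s hlt ih =>
    have hm : m ∉ s := fun h => (hlt m h).false
    have hs : ∀ i ∈ s, i ∈ insert m s := fun i => mem_insert_of_mem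
    have hfilter_m : ({i ∈ insert m s | i ≤ m} : Finset ι) = insert m s :=
      filter_true_of_mem fun i hi => (mem_insert.1 hi).elim le_of_eq fun h => (hlt i h).le
    have hfilter_j :
        ∀ j ∈ s, ({i ∈ insert m s | i ≤ j} : Finset ι) = {i ∈ s | i ≤ j} :=
      fun j hj => by rw [filter_insert, if_neg (hlt j hj).not_ge]
    have hsplit : ∑ i ∈ insert m s, a i * d i
        = a m * ∑ i ∈ insert m s, d i + ∑ i ∈ s, (a i - a m) * d i := by
      simp only [sum_insert hm, mul_add, sub_mul, sum_sub_distrib, mul_sum]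
      ring
    rw [hsplit]
    refine add_nonneg (mul_nonneg (ha₀ m (mem_insert_self m s)) ?_) (ih ?_ ?_ ?_)
    · simpa [hfilter_m] using hd m (mem_insert_self m s)
    · exact fun i hi j hj hij => sub_le_sub_right (ha (hs i hi) (hs j hj) hij) _
    · exact fun i hi => sub_nonneg.2 (ha (hs i hi) (mem_insert_self m s) (hlt i hi).le)
    · exact fun j hj => by simpa [hfilter_j j hj] using hd j (hs j hj)

theorem optimal_weighted_sum_rate_general
    (K : ℕ)
    (σX2 : ℝ) (hσX2 : 0 < σX2)
    (σN2 : Fin K → ℝ) (hσN2 : ∀ k, 0 < σN2 k)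
    (r : Fin K → ℝ) (hr : ∀ k, 0 ≤ r k)
    (D : ℝ)
    (z : Fin K → ℝ) (hz : ∀ k, z k = (1 - Real.exp (-2 * r k)) / σN2 k)
    (hsum : ∑ k, z k = 1 / D)
    (α : Fin K → ℝ) (hα_mono : ∀ i j : Fin K, i ≤ j → α j ≤ α i)
    (hα_nonneg : ∀ k, 0 ≤ α k)
    (Rstar : Fin K → ℝ)
    (hRstar : ∀ k, Rstar k = r k
      + (1 / 2) * Real.log (1 / σX2 + ∑ i ∈ Finset.univ.filter (fun i => k ≤ i), z i)
      - (1 / 2) * Real.log (1 / σX2 + ∑ i ∈ Finset.univ.filter (fun i => k < i), z i))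
    (𝓡 : Set (Fin K → ℝ))
    (h𝓡 : 𝓡 = { R : Fin K → ℝ | ∀ A : Finset (Fin K),
      ∑ k ∈ A, R k ≥ (∑ k ∈ A, r k)
        + (1 / 2) * Real.log (1 / σX2 + 1 / D)
        - (1 / 2) * Real.log (1 / σX2 + ∑ k ∈ Aᶜ, z k) }) :
    Rstar ∈ 𝓡 ∧ ∀ R' ∈ 𝓡, ∑ k, α k * Rstar k ≤ ∑ k, α k * R' k := by
  subst h𝓡
  have hz₀ (k : Fin K) : 0 ≤ z k := hz k ▸ div_nonneg
    (sub_nonneg.2 (Real.exp_le_one_iff.2 (by linarith [hr k]))) (hσN2 k).le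
  have hsum_Rstar (A : Finset (Fin K)) : ∑ k ∈ A, Rstar k
      = ∑ k ∈ A, r k + 1 / 2 * ∑ k ∈ A, tailLogIncrement (1 / σX2) z k := by
    simp only [hRstar, tailLogIncrement, mul_sum, ← sum_add_distrib]
    exact sum_congr rfl fun k _ => by ring
  refine ⟨fun A => ?_, fun R' hR' => ?_⟩
  · have := log_sub_log_compl_le_sum_tailLogIncrement (by positivity : 0 < 1 / σX2) hz₀ A
    rw [ge_iff_le, hsum_Rstar, ← hsum]
    linarith
  · have hinitial (j : Fin K) : 0 ≤ ∑ i ∈ univ.filter (· ≤ j), (R' i - Rstar i) := by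
      have hlower : IsLowerSet ((univ.filter (· ≤ j) : Finset (Fin K)) : Set (Fin K)) :=
        fun a b hba ha => by simp_all [hba.trans]
      have := hR' (univ.filter (· ≤ j))
      rw [sum_sub_distrib, hsum_Rstar, sum_tailLogIncrement_of_isLowerSet _ _ hlower, hsum]
      linarith
    have := sum_mul_nonneg_of_antitoneOn (s := univ) (d := R' - Rstar)
      (fun i _ j _ => hα_mono i j) (fun i _ => hα_nonneg i) (fun j _ => hinitial j)
    simp only [Pi.sub_apply, mul_sub, sum_sub_distrib] at this
    linarith

/-- Explicit minimizer of the weighted sum rate over the single-layer rate region of the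
unbiased CEO problem (Lemma 2 of the paper, single layer): the point `R*` with
`R*_k = r_k + (1/2)·log(1/σ_X² + S_k) − (1/2)·log(1/σ_X² + S_{k+1})` lies in the rate region
`𝓡` and minimizes `∑ α_k R_k` over `𝓡` for nonincreasing nonnegative weights `α`. -/
theorem optimal_weighted_sum_rate
    (K : ℕ) (hK : 1 ≤ K)
    (σX2 : ℝ) (hσX2 : 0 < σX2)
    (σN2 : Fin K → ℝ) (hσN2 : ∀ k, 0 < σN2 k)
    (r : Fin K → ℝ) (hr : ∀ k, 0 ≤ r k)
    (D : ℝ) (hD : 0 < D)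
    (z : Fin K → ℝ) (hz : ∀ k, z k = (1 - Real.exp (-2 * r k)) / σN2 k)
    (hsum : ∑ k, z k = 1 / D)
    (α : Fin K → ℝ) (hα_mono : ∀ i j : Fin K, i ≤ j → α j ≤ α i)
    (hα_nonneg : ∀ k, 0 ≤ α k)
    (Rstar : Fin K → ℝ)
    (hRstar : ∀ k, Rstar k = r k
      + (1 / 2) * Real.log (1 / σX2 + ∑ i ∈ Finset.univ.filter (fun i => k ≤ i), z i)
      - (1 / 2) * Real.log (1 / σX2 + ∑ i ∈ Finset.univ.filter (fun i => k < i), z i))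
    (𝓡 : Set (Fin K → ℝ))
    (h𝓡 : 𝓡 = { R : Fin K → ℝ | ∀ A : Finset (Fin K),
      ∑ k ∈ A, R k ≥ (∑ k ∈ A, r k)
        + (1 / 2) * Real.log (1 / σX2 + 1 / D)
        - (1 / 2) * Real.log (1 / σX2 + ∑ k ∈ Aᶜ, z k) }) :
    Rstar ∈ 𝓡 ∧ ∀ R' ∈ 𝓡, ∑ k, α k * Rstar k ≤ ∑ k, α k * R' k :=
  optimal_weighted_sum_rate_general K σX2 hσX2 σN2 hσN2 r hr D z hz hsum α hα_mono hα_nonneg Rstar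
    hRstar 𝓡 h𝓡
end

section
/- Let K ≥ 1 be an integer, let σ_N² > 0, σ_X² ≥ 0, and let D > σ_N²/K. Then the set { ∑_{k=1}^K r_k + (1/2)·log(1 + σ_X²/D) : r_1, …, r_K ≥ 0 and ∑_{k=1}^K (1 − exp(−2r_k))/σ_N² = 1/D } has least element (K/2)·log(1 + σ_N²/(K·D − σ_N²)) + (1/2)·log(1 + σ_X²/D); in particular the minimum is attained at the symmetric point r_1 = … = r_K = (1/2)·log(K·D/(K·D − σ_N²)). -/
/-!
Writing `e_k = exp(-2 r_k)`, the distortion constraint fixes `∑ e_k = K - σ_N²/D`. By convexity of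
`exp` (Jensen), `exp(-2/K · ∑ r_k) ≤ (1/K) ∑ e_k`, so `∑ r_k ≥ (K/2) log(K D / (K D - σ_N²))`, with
equality exactly when all `e_k` are equal; the symmetric point meets the constraint and attains it.
-/

open Real Finset

theorem sum_le_card_mul_log_mean_exp {ι : Type*} (s : Finset ι) (hs : s.Nonempty) (t : ι → ℝ) :
    ∑ i ∈ s, t i ≤ #s * log ((∑ i ∈ s, exp (t i)) / #s) := by
  have hn : (0 : ℝ) < #s := by exact_mod_cast hs.card_pos
  have jensen := convexOn_exp.map_sum_le (t := s) (w := fun _ => 1 / (#s : ℝ)) (p := t)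
    (fun _ _ => by positivity) (by simp [hn.ne']) (fun _ _ => Set.mem_univ _)
  simp only [smul_eq_mul, ← mul_sum] at jensen
  have hmean : (∑ i ∈ s, t i) / #s ≤ log ((∑ i ∈ s, exp (t i)) / #s) := by
    rw [le_log_iff_exp_le (by have := hs.exists_mem; positivity)]
    simpa [div_eq_inv_mul] using jensen
  rwa [div_le_iff₀' hn] at hmean

theorem card_div_two_mul_log_le_sum_of_sum_exp_eq {ι : Type*} [Fintype ι] [Nonempty ι]
    (r : ι → ℝ) {a : ℝ} (hsum : ∑ i, exp (-2 * r i) = a) :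
    (Fintype.card ι / 2) * log (Fintype.card ι / a) ≤ ∑ i, r i := by
  have hjensen := sum_le_card_mul_log_mean_exp univ univ_nonempty (fun i => -2 * r i)
  rw [hsum, ← inv_div, log_inv, ← mul_sum, card_univ] at hjensen
  linarith

theorem sum_eq_card_sub_div_of_sum_one_sub_div_eq {ι : Type*} [Fintype ι] (f : ι → ℝ)
    {σ D : ℝ} (hσ : σ ≠ 0) (hD : D ≠ 0) (h : ∑ i, (1 - f i) / σ = 1 / D) :
    ∑ i, f i = Fintype.card ι - σ / D := by
  rw [← sum_div, sum_sub_distrib, sum_const, card_univ, nsmul_one, div_eq_div_iff hσ hD] at h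
  field_simp
  linarith

theorem exp_neg_two_mul_half_log {x : ℝ} (hx : 0 < x) : exp (-2 * ((1 / 2) * log x)) = x⁻¹ := by
  rw [show -2 * ((1 / 2) * log x) = log x⁻¹ by rw [log_inv]; ring, exp_log (inv_pos.mpr hx)]

theorem sum_rate_distortion_function_general
    (K : ℕ) (hK : 1 ≤ K) (σN2 σX2 D : ℝ) (hσN2 : 0 < σN2)
    (hD : σN2 / K < D) :
    IsLeast
      { s : ℝ | ∃ r : Fin K → ℝ, (∀ k, 0 ≤ r k) ∧
          (∑ k, (1 - Real.exp (-2 * r k)) / σN2 = 1 / D) ∧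
          s = (∑ k, r k) + (1 / 2) * Real.log (1 + σX2 / D) }
      ((K / 2 : ℝ) * Real.log (1 + σN2 / (K * D - σN2))
        + (1 / 2) * Real.log (1 + σX2 / D)) ∧
    (∀ k : Fin K, (0 : ℝ) ≤ (1 / 2) * Real.log (K * D / (K * D - σN2))) ∧
    (∑ _k : Fin K, (1 - Real.exp (-2 * ((1 / 2) * Real.log (K * D / (K * D - σN2))))) / σN2
        = 1 / D) ∧
    ((∑ _k : Fin K, (1 / 2) * Real.log (K * D / (K * D - σN2)))
        + (1 / 2) * Real.log (1 + σX2 / D)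
      = (K / 2 : ℝ) * Real.log (1 + σN2 / (K * D - σN2))
        + (1 / 2) * Real.log (1 + σX2 / D)) := by
  have hK0 : (0 : ℝ) < K := by exact_mod_cast hK
  have hD0 : 0 < D := (div_pos hσN2 hK0).trans hD
  have hgap : 0 < K * D - σN2 := by rw [div_lt_iff₀ hK0] at hD; linarith
  have hlog : log (1 + σN2 / (K * D - σN2)) = log (K * D / (K * D - σN2)) := by
    rw [one_add_div hgap.ne', sub_add_cancel]
  have hrate : 0 ≤ (1 / 2) * log (K * D / (K * D - σN2)) :=
    mul_nonneg (by norm_num) (log_nonneg ((one_le_div hgap).mpr (by linarith)))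
  have hfeasible : ∑ _k : Fin K, (1 - exp (-2 * ((1 / 2) * log (K * D / (K * D - σN2))))) / σN2
      = 1 / D := by
    rw [exp_neg_two_mul_half_log (by positivity), sum_const, card_fin, nsmul_eq_mul]
    field_simp
    ring
  have hvalue : (∑ _k : Fin K, (1 / 2) * log (K * D / (K * D - σN2))) + (1 / 2) * log (1 + σX2 / D)
      = (K / 2 : ℝ) * log (1 + σN2 / (K * D - σN2)) + (1 / 2) * log (1 + σX2 / D) := by
    rw [sum_const, card_fin, nsmul_eq_mul, hlog]
    ring
  refine ⟨⟨⟨_, fun _ => hrate, hfeasible, hvalue.symm⟩, ?_⟩, fun _ => hrate, hfeasible, hvalue⟩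
  rintro _ ⟨r, -, hconstraint, rfl⟩
  have : Nonempty (Fin K) := ⟨⟨0, hK⟩⟩
  have hbound := card_div_two_mul_log_le_sum_of_sum_exp_eq r
    (sum_eq_card_sub_div_of_sum_one_sub_div_eq _ hσN2.ne' hD0.ne' hconstraint)
  rw [Fintype.card_fin, show (K : ℝ) / (K - σN2 / D) = K * D / (K * D - σN2) by
    field_simp] at hbound
  rw [hlog]
  linarith

/-- Closed form of the sum-rate-distortion function for `K` homogeneous worker nodes:
the set of achievable sum rates has least element
`(K/2)·log(1 + σ_N²/(K·D − σ_N²)) + (1/2)·log(1 + σ_X²/D)`, attained at the symmetric point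
`r_1 = … = r_K = (1/2)·log(K·D/(K·D − σ_N²))`. -/
theorem sum_rate_distortion_function
    (K : ℕ) (hK : 1 ≤ K) (σN2 σX2 D : ℝ) (hσN2 : 0 < σN2) (hσX2 : 0 ≤ σX2)
    (hD : σN2 / K < D) :
    IsLeast
      { s : ℝ | ∃ r : Fin K → ℝ, (∀ k, 0 ≤ r k) ∧
          (∑ k, (1 - Real.exp (-2 * r k)) / σN2 = 1 / D) ∧
          s = (∑ k, r k) + (1 / 2) * Real.log (1 + σX2 / D) }
      ((K / 2 : ℝ) * Real.log (1 + σN2 / (K * D - σN2))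
        + (1 / 2) * Real.log (1 + σX2 / D)) ∧
    (∀ k : Fin K, (0 : ℝ) ≤ (1 / 2) * Real.log (K * D / (K * D - σN2))) ∧
    (∑ _k : Fin K, (1 - Real.exp (-2 * ((1 / 2) * Real.log (K * D / (K * D - σN2))))) / σN2
        = 1 / D) ∧
    ((∑ _k : Fin K, (1 / 2) * Real.log (K * D / (K * D - σN2)))
        + (1 / 2) * Real.log (1 + σX2 / D)
      = (K / 2 : ℝ) * Real.log (1 + σN2 / (K * D - σN2))
        + (1 / 2) * Real.log (1 + σX2 / D)) :=
  sum_rate_distortion_function_general K hK σN2 σX2 D hσN2 hD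
end

section
/- Let (Ω, 𝓕, P) be a probability space and let X and X̂ be square-integrable real random variables such that E[X̂ | σ(X)] = X almost surely (X̂ is an unbiased estimator of X). Suppose E[X] = 0, E[X²] = σ_X² > 0, and E[(X − X̂)²] = w > 0. Then E[(X − E[X | σ(X̂)])²] ≤ (1/σ_X² + 1/w)^{−1} = σ_X²·w/(σ_X² + w). -/
open MeasureTheory

section Aux

variable {Ω : Type*}

private lemma integrable_mul_of_memℒp_two {m0 : MeasurableSpace Ω} {μ : Measure Ω}
    {f g : Ω → ℝ} (hf : MemLp f 2 μ) (hg : MemLp g 2 μ) :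
    Integrable (fun ω => f ω * g ω) μ := by
  have h : MemLp (f • g) 1 μ :=
    hg.smul hf
  rw [memLp_one_iff_integrable] at h
  exact h.congr (Filter.Eventually.of_forall fun ω => rfl)

private lemma memℒp_two_condexp {m m0 : MeasurableSpace Ω} (hm : m ≤ m0)
    {μ : Measure Ω} [IsFiniteMeasure μ] {f : Ω → ℝ} (hf : MemLp f 2 μ) :
    MemLp (μ[f|m]) 2 μ := by
  haveI := isFiniteMeasure_trim (μ := μ) hm
  have hfi : Integrable f μ := hf.integrable one_le_two
  have hae : (((condExpL2 ℝ ℝ hm (hf.toLp f) : lpMeas ℝ ℝ m 2 μ) : Lp ℝ 2 μ) : Ω → ℝ)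
      =ᵐ[μ] μ[f|m] := by
    refine ae_eq_condExp_of_forall_setIntegral_eq hm hfi ?_ ?_ ?_
    · intro s _ _
      exact (integrable_condExpL2_of_isFiniteMeasure hm).integrableOn
    · intro s hs hμs
      rw [integral_condExpL2_eq hm (hf.toLp f) hs hμs.ne]
      exact integral_congr_ae (ae_restrict_of_ae (hf.coeFn_toLp))
    · exact aestronglyMeasurable_condExpL2 hm _
  exact (Lp.memLp _).ae_eq hae

private lemma integral_mul_condexp' {m m0 : MeasurableSpace Ω} (hm : m ≤ m0)
    {μ : Measure Ω} [IsFiniteMeasure μ] {φ f : Ω → ℝ} (hφ : StronglyMeasurable[m] φ)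
    (hφf : Integrable (fun ω => φ ω * f ω) μ) (hf : Integrable f μ) :
    ∫ ω, φ ω * f ω ∂μ = ∫ ω, φ ω * (μ[f|m]) ω ∂μ := by
  haveI := isFiniteMeasure_trim (μ := μ) hm
  have h : μ[φ * f|m] =ᵐ[μ] φ * μ[f|m] :=
    condExp_mul_of_stronglyMeasurable_left hφ hφf hf
  calc ∫ ω, φ ω * f ω ∂μ = ∫ ω, (μ[φ * f|m]) ω ∂μ :=
        (integral_condExp hm (f := φ * f)).symm
    _ = ∫ ω, φ ω * (μ[f|m]) ω ∂μ := integral_congr_ae h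

end Aux

/-- LMMSE bound on the mean conditional variance of `X` given an unbiased estimator `X̂`:
if `E[X̂ | σ(X)] = X` a.s., `E[X] = 0`, `E[X²] = σ_X² > 0` and `E[(X − X̂)²] = w > 0`, then
`E[(X − E[X | σ(X̂)])²] ≤ (1/σ_X² + 1/w)⁻¹ = σ_X²·w/(σ_X² + w)`. -/
theorem conditional_variance_le_of_unbiased
    {Ω : Type*} [MeasurableSpace Ω] (μ : Measure Ω) [IsProbabilityMeasure μ]
    (X Xhat : Ω → ℝ) (hXm : Measurable X) (hXhatm : Measurable Xhat)
    (hX2 : MemLp X 2 μ) (hXhat2 : MemLp Xhat 2 μ)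
    (hunbiased : μ[Xhat | MeasurableSpace.comap X inferInstance] =ᵐ[μ] X)
    (σX2 w : ℝ) (hσX2 : 0 < σX2) (hw : 0 < w)
    (hmean : ∫ ω, X ω ∂μ = 0)
    (hvar : ∫ ω, (X ω) ^ 2 ∂μ = σX2)
    (hmse : ∫ ω, (X ω - Xhat ω) ^ 2 ∂μ = w) :
    ∫ ω, (X ω - (μ[X | MeasurableSpace.comap Xhat inferInstance]) ω) ^ 2 ∂μ
        ≤ (1 / σX2 + 1 / w)⁻¹ ∧
      (1 / σX2 + 1 / w)⁻¹ = σX2 * w / (σX2 + w) := by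
  have hsum : (0 : ℝ) < σX2 + w := by linarith
  constructor
  swap
  · field_simp
    ring
  have hm1 : MeasurableSpace.comap X inferInstance ≤ (inferInstance : MeasurableSpace Ω) :=
    hXm.comap_le
  have hm2 : MeasurableSpace.comap Xhat inferInstance ≤ (inferInstance : MeasurableSpace Ω) :=
    hXhatm.comap_le
  have hXsm1 : StronglyMeasurable[MeasurableSpace.comap X inferInstance] X :=
    (Measurable.of_comap_le le_rfl).stronglyMeasurable
  have hXhatsm2 : StronglyMeasurable[MeasurableSpace.comap Xhat inferInstance] Xhat :=
    (Measurable.of_comap_le le_rfl).stronglyMeasurable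
  have hXint : Integrable X μ := hX2.integrable one_le_two
  have hXhatint : Integrable Xhat μ := hXhat2.integrable one_le_two
  -- Step A : ∫ X * Xhat = σX2
  have hXXhat_int : Integrable (fun ω => X ω * Xhat ω) μ :=
    integrable_mul_of_memℒp_two hX2 hXhat2
  have stepA : ∫ ω, X ω * Xhat ω ∂μ = σX2 := by
    rw [integral_mul_condexp' hm1 hXsm1 hXXhat_int hXhatint]
    calc ∫ ω, X ω * (μ[Xhat|MeasurableSpace.comap X inferInstance]) ω ∂μ
        = ∫ ω, X ω * X ω ∂μ := by
          refine integral_congr_ae ?_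
          filter_upwards [hunbiased] with ω hω
          rw [hω]
      _ = σX2 := by rw [← hvar]; congr 1; funext ω; ring
  -- Step B : ∫ Xhat ^ 2 = σX2 + w
  have hXsq_int : Integrable (fun ω => X ω ^ 2) μ := hX2.integrable_sq
  have hXhatsq_int : Integrable (fun ω => Xhat ω ^ 2) μ := hXhat2.integrable_sq
  have stepB : ∫ ω, Xhat ω ^ 2 ∂μ = σX2 + w := by
    have hexp : ∫ ω, (X ω - Xhat ω) ^ 2 ∂μ
        = ∫ ω, (X ω ^ 2 - 2 * (X ω * Xhat ω) + Xhat ω ^ 2) ∂μ := by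
      congr 1; funext ω; ring
    rw [hexp] at hmse
    rw [integral_add (show Integrable (fun ω => X ω ^ 2 - 2 * (X ω * Xhat ω)) μ from
        hXsq_int.sub (hXXhat_int.const_mul 2)) hXhatsq_int,
      integral_sub hXsq_int
        (show Integrable (fun ω => 2 * (X ω * Xhat ω)) μ from hXXhat_int.const_mul 2),
      integral_const_mul, hvar, stepA] at hmse
    linarith
  -- setup for the projection step
  set c : ℝ := σX2 / (σX2 + w) with hcdef
  set E : Ω → ℝ := μ[X|MeasurableSpace.comap Xhat inferInstance] with hEdef
  have hE2 : MemLp E 2 μ := memℒp_two_condexp hm2 hX2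
  set W : Ω → ℝ := fun ω => E ω - c * Xhat ω with hWdef
  have hZ2 : MemLp (fun ω => c * Xhat ω) 2 μ := hXhat2.const_mul c
  have hW2 : MemLp W 2 μ := by
    have := hE2.sub hZ2
    exact this
  have hWsm2 : StronglyMeasurable[MeasurableSpace.comap Xhat inferInstance] W := by
    have h1 : StronglyMeasurable[MeasurableSpace.comap Xhat inferInstance] E :=
      stronglyMeasurable_condExp
    have h2 : StronglyMeasurable[MeasurableSpace.comap Xhat inferInstance]
        (fun ω => c * Xhat ω) := hXhatsm2.const_smul c
    exact h1.sub h2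
  have hXE2 : MemLp (fun ω => X ω - E ω) 2 μ := by
    have := hX2.sub hE2
    exact this
  -- orthogonality : ∫ W * (X - E) = 0
  have horth : ∫ ω, W ω * (X ω - E ω) ∂μ = 0 := by
    have h1 : ∫ ω, W ω * X ω ∂μ = ∫ ω, W ω * E ω ∂μ :=
      integral_mul_condexp' hm2 hWsm2 (integrable_mul_of_memℒp_two hW2 hX2) hXint
    have h2 : ∫ ω, W ω * (X ω - E ω) ∂μ
        = ∫ ω, W ω * X ω ∂μ - ∫ ω, W ω * E ω ∂μ := by
      rw [← integral_sub (integrable_mul_of_memℒp_two hW2 hX2)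
        (integrable_mul_of_memℒp_two hW2 hE2)]
      congr 1; funext ω; ring
    rw [h2, h1, sub_self]
  -- pythagoras : ∫ (X - c*Xhat)² = ∫ (X - E)² + ∫ W²
  have hXEsq_int : Integrable (fun ω => (X ω - E ω) ^ 2) μ := hXE2.integrable_sq
  have hWsq_int : Integrable (fun ω => W ω ^ 2) μ := hW2.integrable_sq
  have hcross_int : Integrable (fun ω => W ω * (X ω - E ω)) μ :=
    integrable_mul_of_memℒp_two hW2 hXE2
  have hpyth : ∫ ω, (X ω - c * Xhat ω) ^ 2 ∂μ
      = ∫ ω, (X ω - E ω) ^ 2 ∂μ + ∫ ω, W ω ^ 2 ∂μ := by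
    have hexp : ∫ ω, (X ω - c * Xhat ω) ^ 2 ∂μ
        = ∫ ω, ((X ω - E ω) ^ 2 + 2 * (W ω * (X ω - E ω)) + W ω ^ 2) ∂μ := by
      congr 1; funext ω
      simp only [hWdef]; ring
    rw [hexp, integral_add (show Integrable
          (fun ω => (X ω - E ω) ^ 2 + 2 * (W ω * (X ω - E ω))) μ from
          hXEsq_int.add (hcross_int.const_mul 2)) hWsq_int,
      integral_add hXEsq_int
        (show Integrable (fun ω => 2 * (W ω * (X ω - E ω))) μ from hcross_int.const_mul 2),
      integral_const_mul, horth]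
    ring
  -- value of ∫ (X - c*Xhat)²
  have hval : ∫ ω, (X ω - c * Xhat ω) ^ 2 ∂μ = (1 / σX2 + 1 / w)⁻¹ := by
    have hexp : ∫ ω, (X ω - c * Xhat ω) ^ 2 ∂μ
        = ∫ ω, (X ω ^ 2 - 2 * c * (X ω * Xhat ω) + c ^ 2 * Xhat ω ^ 2) ∂μ := by
      congr 1; funext ω; ring
    rw [hexp, integral_add (show Integrable
          (fun ω => X ω ^ 2 - 2 * c * (X ω * Xhat ω)) μ from
          hXsq_int.sub (hXXhat_int.const_mul (2 * c)))
        (show Integrable (fun ω => c ^ 2 * Xhat ω ^ 2) μ from hXhatsq_int.const_mul (c ^ 2)),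
      integral_sub hXsq_int
        (show Integrable (fun ω => 2 * c * (X ω * Xhat ω)) μ from hXXhat_int.const_mul (2 * c)),
      integral_const_mul, integral_const_mul, hvar, stepA, stepB, hcdef]
    field_simp
    ring
  -- conclude
  have hWnonneg : 0 ≤ ∫ ω, W ω ^ 2 ∂μ := integral_nonneg fun ω => sq_nonneg _
  calc ∫ ω, (X ω - E ω) ^ 2 ∂μ ≤ ∫ ω, (X ω - c * Xhat ω) ^ 2 ∂μ := by
        rw [hpyth]; linarith
    _ = (1 / σX2 + 1 / w)⁻¹ := hval
end

section
/- Let σ_N² > 0, σ_X² > 0, let K ≥ 1 be an integer, and set D = (1/K)·(σ_N² + ((π − 2)/π)·(σ_N² + σ_X²)). Then (K/2)·log(1 + σ_N²/(K·D − σ_N²)) + (K/2)·log(1 + σ_X²/(K·D)) = (K/2)·log(1 + π/(π − 2)). -/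
open Real

/-! With `c = (π - 2)/π`, the distortion satisfies `K D = σ_N² + c (σ_N² + σ_X²)`, and the product
of the two arguments of `log` telescopes:
`(1 + σ_N²/(c (σ_N² + σ_X²))) (1 + σ_X²/(σ_N² + c (σ_N² + σ_X²))) = (1 + c)/c = 1 + π/(π - 2)`. -/

lemma one_add_div_mul_one_add_div_eq {a b c : ℝ} (hab : a + b ≠ 0) (hc : c ≠ 0)
    (hac : a + c * (a + b) ≠ 0) :
    (1 + a / (c * (a + b))) * (1 + b / (a + c * (a + b))) = 1 + 1 / c := by
  field_simp
  ring

lemma log_one_add_div_add_log_one_add_div_eq {a b c : ℝ} (ha : 0 < a) (hb : 0 < b) (hc : 0 < c) :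
    log (1 + a / (c * (a + b))) + log (1 + b / (a + c * (a + b))) = log (1 + 1 / c) := by
  rw [← log_mul (by positivity) (by positivity),
    one_add_div_mul_one_add_div_eq (by positivity) hc.ne' (by positivity)]

/-- The independent-encoding sum rate `R_in(D)` evaluated at the distortion of SignSGD
collapses to the constant `(K/2)·log(1 + π/(π − 2))`. -/
theorem signSGD_sum_rate_constant
    (σN2 σX2 : ℝ) (hσN2 : 0 < σN2) (hσX2 : 0 < σX2) (K : ℕ) (hK : 1 ≤ K)
    (D : ℝ) (hD : D = (1 / K) * (σN2 + ((π - 2) / π) * (σN2 + σX2))) :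
    (K / 2 : ℝ) * Real.log (1 + σN2 / (K * D - σN2))
      + (K / 2 : ℝ) * Real.log (1 + σX2 / (K * D))
      = (K / 2 : ℝ) * Real.log (1 + π / (π - 2)) := by
  set c := (π - 2) / π with hc_def
  have hc : 0 < c := div_pos (by linarith [pi_gt_three]) pi_pos
  have hK0 : (K : ℝ) ≠ 0 := by exact_mod_cast (Nat.one_le_iff_ne_zero.mp hK)
  have hKD : (K : ℝ) * D = σN2 + c * (σN2 + σX2) := by
    rw [hD, ← mul_assoc, mul_one_div_cancel hK0, one_mul]
  rw [hKD, add_sub_cancel_left, ← mul_add, log_one_add_div_add_log_one_add_div_eq hσN2 hσX2 hc,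
    hc_def, one_div_div]
end
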